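/- With moves a = (1,0), b = (0,1), c = (1,1) on the 2-dimensional grid, the unique word from (p,q) to (r,s) (with p ≤ r, q ≤ s) avoiding the factors ab, ba, ac, bc is c^m a^{(r-p)-m} if r-p ≥ s-q where m = s-q, and c^m b^{(s-q)-m} with m = r-p otherwise; i.e., it takes all diagonal (c) moves first. -/

import Mathlib

/-- The 4-letter alphabet {a, b, c, x}. -/
inductive Ltr | a | b | c | x
deriving DecidableEq

/-- The forbidden two-letter factors: ab, ba, ac, bc. -/
def forb : List (List Ltr) := [[.a, .b], [.b, .a], [.a, .c], [.b, .c]]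

/-- `w` avoids all of ab, ba, ac, bc as factors. -/
def Avoids (w : List Ltr) : Prop := ∀ f ∈ forb, ¬ f <:+: w

/-- Moves on the 2-dimensional grid: a = (1,0), b = (0,1), c = (1,1), x = (1,1). -/
def mv : Ltr → ℕ × ℕ
  | .a => (1, 0)
  | .b => (0, 1)
  | .c => (1, 1)
  | .x => (1, 1)

/-- Total displacement of a word. -/
def disp (w : List Ltr) : ℕ × ℕ := (w.map mv).sum

/-- `w` is a word over {a,b,c} whose moves go from `(p,q)` to `(r,s)`. -/
def Connects (p q r s : ℕ) (w : List Ltr) : Prop :=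
  Ltr.x ∉ w ∧ p + (disp w).1 = r ∧ q + (disp w).2 = s

/-- The canonical word with diagonal (c) moves first: `c^m a^{d1-m}` if
`d1 ≥ d2` (with `m = d2`), and `c^m b^{d2-m}` (with `m = d1`) otherwise. -/
def canonWord (d1 d2 : ℕ) : List Ltr :=
  if d2 ≤ d1 then List.replicate d2 .c ++ List.replicate (d1 - d2) .a
  else List.replicate d1 .c ++ List.replicate (d2 - d1) .b

/-! After `a` only `a` may follow and after `b` only `b` (the letter `x` excluded), so an avoiding
word over `{a, b, c}` is `c^k a^m` or `c^k b^m`. Such a word is determined by its displacement,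
which pins it down as the canonical word. -/

open List

lemma disp_append (u v : List Ltr) : disp (u ++ v) = disp u + disp v := by
  simp [disp]

lemma disp_replicate (n : ℕ) (l : Ltr) : disp (replicate n l) = n • mv l := by
  simp [disp, sum_replicate]

lemma Avoids.of_cons {u : Ltr} {w : List Ltr} (h : Avoids (u :: w)) : Avoids w :=
  fun f hf hinf => h f hf (hinf.trans (suffix_cons u w).isInfix)

lemma avoids_replicate (n : ℕ) (l : Ltr) : Avoids (replicate n l) := by
  intro f hf hinf
  have hconst : ∀ v ∈ f, v = l := fun v hv => eq_of_mem_replicate (hinf.subset hv)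
  simp only [forb, mem_cons, not_mem_nil, or_false] at hf
  rcases hf with rfl | rfl | rfl | rfl <;>
    exact absurd ((hconst _ mem_cons_self).trans (hconst _ (mem_cons_of_mem _ mem_cons_self)).symm)
      (by decide)

lemma avoids_c_cons {w : List Ltr} (h : Avoids w) : Avoids (.c :: w) := by
  intro f hf hinf
  rcases infix_cons_iff.mp hinf with ⟨t, ht⟩ | hinf'
  · simp only [forb, mem_cons, not_mem_nil, or_false] at hf
    rcases hf with rfl | rfl | rfl | rfl <;> simp at ht
  · exact h f hf hinf'

lemma avoids_replicate_c_append_replicate (k m : ℕ) (l : Ltr) :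
    Avoids (replicate k .c ++ replicate m l) := by
  induction k with
  | zero => simpa using avoids_replicate m l
  | succ k ih => simpa [replicate_succ] using avoids_c_cons ih

lemma eq_of_avoids_cons_cons {u v : Ltr} {w : List Ltr} (h : Avoids (u :: v :: w))
    (hu : u = .a ∨ u = .b) (hv : v ≠ .x) : v = u := by
  have hpair : [u, v] ∉ forb := fun hf => h _ hf (prefix_append [u, v] w).isInfix
  rcases hu with rfl | rfl <;> cases v <;> simp_all [forb]

lemma eq_replicate_of_avoids_cons {u : Ltr} {w : List Ltr} (h : Avoids (u :: w))
    (hu : u = .a ∨ u = .b) (hx : Ltr.x ∉ w) : w = replicate w.length u := by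
  induction w with
  | nil => rfl
  | cons v t ih =>
    have hvu : v = u := eq_of_avoids_cons_cons h hu (fun hv => hx (hv ▸ mem_cons_self))
    subst hvu
    rw [length_cons, replicate_succ, ← ih h.of_cons (fun ht => hx (mem_cons_of_mem _ ht))]

lemma exists_eq_replicate_of_avoids {w : List Ltr} (hx : Ltr.x ∉ w) (h : Avoids w) :
    ∃ k m, w = replicate k .c ++ replicate m .a ∨ w = replicate k .c ++ replicate m .b := by
  induction w with
  | nil => exact ⟨0, 0, Or.inl rfl⟩
  | cons u t ih =>
    have hxt : Ltr.x ∉ t := fun ht => hx (mem_cons_of_mem _ ht)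
    cases u with
    | c =>
      obtain ⟨k, m, rfl | rfl⟩ := ih hxt h.of_cons
      exacts [⟨k + 1, m, Or.inl rfl⟩, ⟨k + 1, m, Or.inr rfl⟩]
    | a => exact ⟨0, t.length + 1, Or.inl (by
        rw [eq_replicate_of_avoids_cons h (Or.inl rfl) hxt]; simp [replicate_succ])⟩
    | b => exact ⟨0, t.length + 1, Or.inr (by
        rw [eq_replicate_of_avoids_cons h (Or.inr rfl) hxt]; simp [replicate_succ])⟩
    | x => exact absurd mem_cons_self hx

lemma canonWord_add_left (k m : ℕ) : canonWord (k + m) k = replicate k .c ++ replicate m .a := by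
  simp [canonWord]

lemma canonWord_add_right (k m : ℕ) : canonWord k (k + m) = replicate k .c ++ replicate m .b := by
  rcases m.eq_zero_or_pos with rfl | hm
  · simp [canonWord]
  · simp [canonWord, show ¬ k + m ≤ k by omega]

lemma disp_canonWord (d₁ d₂ : ℕ) : disp (canonWord d₁ d₂) = (d₁, d₂) := by
  unfold canonWord
  split_ifs <;> simp [disp_append, disp_replicate, mv] <;> omega

lemma x_not_mem_canonWord (d₁ d₂ : ℕ) : Ltr.x ∉ canonWord d₁ d₂ := by
  unfold canonWord
  split_ifs <;> simp [mem_replicate]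

lemma avoids_canonWord (d₁ d₂ : ℕ) : Avoids (canonWord d₁ d₂) := by
  unfold canonWord
  split_ifs <;> exact avoids_replicate_c_append_replicate _ _ _

lemma eq_canonWord_disp_of_avoids {w : List Ltr} (hx : Ltr.x ∉ w) (h : Avoids w) :
    w = canonWord (disp w).1 (disp w).2 := by
  obtain ⟨k, m, rfl | rfl⟩ := exists_eq_replicate_of_avoids hx h
  · simp [disp_append, disp_replicate, mv, canonWord_add_left]
  · simp [disp_append, disp_replicate, mv, canonWord_add_right]

lemma connects_iff {p q r s : ℕ} (hp : p ≤ r) (hq : q ≤ s) (w : List Ltr) :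
    Connects p q r s w ↔ Ltr.x ∉ w ∧ disp w = (r - p, s - q) := by
  rw [Connects, Prod.ext_iff]
  exact and_congr_right fun _ => by omega

/-- The unique word from `(p,q)` to `(r,s)` avoiding the factors ab, ba, ac, bc
is the one taking all diagonal (c) moves first: `c^{s-q} a^{(r-p)-(s-q)}` if
`r-p ≥ s-q`, and `c^{r-p} b^{(s-q)-(r-p)}` otherwise. -/
theorem canonical_avoiding_path (p q r s : ℕ) (hp : p ≤ r) (hq : q ≤ s) :
    Connects p q r s (canonWord (r - p) (s - q)) ∧
    Avoids (canonWord (r - p) (s - q)) ∧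
    ∀ w : List Ltr, Connects p q r s w → Avoids w → w = canonWord (r - p) (s - q) := by
  refine ⟨(connects_iff hp hq _).2 ⟨x_not_mem_canonWord _ _, disp_canonWord _ _⟩,
    avoids_canonWord _ _, fun w hw h => ?_⟩
  obtain ⟨hx, hdisp⟩ := (connects_iff hp hq w).1 hw
  rw [eq_canonWord_disp_of_avoids hx h, hdisp]
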